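/- arXiv:1502.06168 — 2 statements merged into one kernel-verified Lean document; each statement's English description precedes it below -/
import Mathlib

section
/- Let H be an interval supergraph of G. Then β(G) ≤ 2·α(G)·φ(G,H)·(log₂(α(G)) + 1), where φ(G,H) is the maximum of β(G[W])/α(G[W]) over subsets W inducing cliques in H. -/
open SimpleGraph

/-- `s` is an independent set in `G`: pairwise nonadjacent vertices. -/
def SimpleGraph.IsIndepFinset {V : Type*} (G : SimpleGraph V) (s : Finset V) : Prop :=
  (s : Set V).Pairwise fun a b => ¬ G.Adj a b

/-- The independence number `α(G)`: the largest size of an independent set. -/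
noncomputable def indepNum {V : Type*} (G : SimpleGraph V) : ℕ :=
  sSup {n | ∃ s : Finset V, G.IsIndepFinset s ∧ s.card = n}

/-- `C` is a clique cover of `G`: a family of cliques covering every vertex. -/
def SimpleGraph.IsCliqueCover {V : Type*} (G : SimpleGraph V) (C : Finset (Finset V)) : Prop :=
  (∀ c ∈ C, G.IsClique (c : Set V)) ∧ ∀ v : V, ∃ c ∈ C, v ∈ c

/-- The clique cover number `β(G)`: minimum number of cliques covering `V(G)`. -/
noncomputable def cliqueCoverNum {V : Type*} (G : SimpleGraph V) : ℕ :=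
  sInf {n | ∃ C : Finset (Finset V), G.IsCliqueCover C ∧ C.card = n}

/-- `G` is an interval graph: the intersection graph of closed real intervals. -/
def IsIntervalGraph {V : Type*} (G : SimpleGraph V) : Prop :=
  ∃ a b : V → ℝ, ∀ u v : V, G.Adj u v ↔
    u ≠ v ∧ (Set.Icc (a u) (b u) ∩ Set.Icc (a v) (b v)).Nonempty

/-- `G` is perfect (stated via clique covers): `β = α` on every induced subgraph. -/
def IsPerfectGraph {V : Type*} (G : SimpleGraph V) : Prop :=
  ∀ W : Finset V, cliqueCoverNum (G.induce (W : Set V)) = _root_.indepNum (G.induce (W : Set V))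

/-- `φ(G,H)`: the maximum of `β(G[W])/α(G[W])` over subsets `W` inducing cliques in `H`. -/
noncomputable def phi {V : Type*} (G H : SimpleGraph V) : ℝ :=
  sSup {x : ℝ | ∃ W : Finset V, H.IsClique (W : Set V) ∧
    x = (cliqueCoverNum (G.induce (W : Set V)) : ℝ) / (_root_.indepNum (G.induce (W : Set V)) : ℝ)}

/-!
Write `α_S(G)` for the largest size of an independent set of `G` inside `S`, and `β_S(G)` for the
fewest cliques of `G` covering `S`. Fix an interval model of `H` with nonempty intervals
`[a v, b v]`, so every edge of `G` joins overlapping intervals. Let `c` be the smallest right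
endpoint whose prefix `{v ∈ S | b v ≤ c}` has independence number more than `α_S(G) / 2`. The
vertices strictly left of `c` then have independence number at most `α_S(G) / 2` by minimality of
`c`, and so do those strictly right of `c`, since a maximum independent set of the prefix together
with one of the right part is independent in `S`. The intervals containing `c` form a clique of
`H`, which `G` covers by at most `φ · α_S(G)` cliques. Recursing on both sides gives
`β_S(G) ≤ φ · g(m)` whenever `α_S(G) ≤ m`, for any `g` with `m + 2 g(⌊m/2⌋) ≤ g(m)`, such as
`g(m) = 2 m (log₂ m + 1)`.
-/

open Finset

noncomputable def coverBound (m : ℕ) : ℝ :=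
  2 * m * (Real.logb 2 m + 1)

lemma coverBound_nonneg (m : ℕ) : 0 ≤ coverBound m := by
  rcases m.eq_zero_or_pos with rfl | hm
  · simp [coverBound]
  have : 0 ≤ Real.logb 2 m := Real.logb_nonneg one_lt_two (by exact_mod_cast hm)
  unfold coverBound
  positivity

lemma add_two_mul_coverBound_half_le {m : ℕ} (hm : 1 ≤ m) :
    m + 2 * coverBound (m / 2) ≤ coverBound m := by
  obtain rfl | hm2 := hm.eq_or_lt
  · norm_num [coverBound]
  have hk : (1 : ℝ) ≤ (m / 2 : ℕ) := by exact_mod_cast (by omega : 1 ≤ m / 2)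
  have h2k : 2 * ((m / 2 : ℕ) : ℝ) ≤ m := by exact_mod_cast Nat.mul_div_le m 2
  have hlog : Real.logb 2 (m / 2 : ℕ) + 1 = Real.logb 2 (2 * (m / 2 : ℕ)) := by
    rw [Real.logb_mul two_ne_zero (by positivity), Real.logb_self_eq_one one_lt_two]
    ring
  have hmono := Real.logb_le_logb_of_le one_lt_two (by positivity) h2k
  have hpos : 0 ≤ Real.logb 2 (2 * (m / 2 : ℕ)) := Real.logb_nonneg one_lt_two (by linarith)
  unfold coverBound
  rw [hlog]
  nlinarith [mul_le_mul h2k hmono hpos (by positivity)]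

namespace SimpleGraph

variable {V : Type*}

section IndepNumOn

variable {G : SimpleGraph V} {S S₁ S₂ t : Finset V}

open Classical in
noncomputable def indepNumOn (G : SimpleGraph V) (S : Finset V) : ℕ :=
  (S.powerset.filter G.IsIndepFinset).sup card

lemma isIndepFinset_empty : G.IsIndepFinset ∅ := by
  simp [IsIndepFinset]

lemma le_indepNumOn (hts : t ⊆ S) (ht : G.IsIndepFinset t) : t.card ≤ G.indepNumOn S := by
  classical
  exact le_sup (f := card) (mem_filter.2 ⟨mem_powerset.2 hts, ht⟩)

lemma exists_indepNumOn (S : Finset V) :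
    ∃ t ⊆ S, G.IsIndepFinset t ∧ t.card = G.indepNumOn S := by
  classical
  obtain ⟨t, ht, heq⟩ := exists_mem_eq_sup (S.powerset.filter G.IsIndepFinset)
    ⟨∅, mem_filter.2 ⟨empty_mem_powerset S, isIndepFinset_empty⟩⟩ card
  obtain ⟨hts, hti⟩ := mem_filter.1 ht
  exact ⟨t, mem_powerset.1 hts, hti, heq.symm⟩

lemma indepNumOn_mono (h : S₁ ⊆ S₂) : G.indepNumOn S₁ ≤ G.indepNumOn S₂ := by
  obtain ⟨t, hts, hti, hcard⟩ := exists_indepNumOn (G := G) S₁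
  exact hcard ▸ le_indepNumOn (hts.trans h) hti

lemma one_le_indepNumOn (hS : S.Nonempty) : 1 ≤ G.indepNumOn S := by
  obtain ⟨v, hv⟩ := hS
  simpa using le_indepNumOn (G := G) (singleton_subset_iff.2 hv) (by simp [IsIndepFinset])

lemma indepNumOn_add_indepNumOn_le (h₁ : S₁ ⊆ S) (h₂ : S₂ ⊆ S) (hd : Disjoint S₁ S₂)
    (hnadj : ∀ x ∈ S₁, ∀ y ∈ S₂, ¬ G.Adj x y) :
    G.indepNumOn S₁ + G.indepNumOn S₂ ≤ G.indepNumOn S := by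
  classical
  obtain ⟨t₁, ht₁, ht₁i, hcard₁⟩ := exists_indepNumOn (G := G) S₁
  obtain ⟨t₂, ht₂, ht₂i, hcard₂⟩ := exists_indepNumOn (G := G) S₂
  rw [← hcard₁, ← hcard₂, ← card_union_of_disjoint (hd.mono ht₁ ht₂)]
  refine le_indepNumOn (union_subset (ht₁.trans h₁) (ht₂.trans h₂)) ?_
  rw [IsIndepFinset, coe_union, Set.pairwise_union]
  exact ⟨ht₁i, ht₂i, fun x hx y hy _ =>
    ⟨hnadj x (ht₁ hx) y (ht₂ hy), fun hyx => hnadj x (ht₁ hx) y (ht₂ hy) hyx.symm⟩⟩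

lemma le_indepNum [Fintype V] (ht : G.IsIndepFinset t) : t.card ≤ _root_.indepNum G :=
  le_csSup ⟨Fintype.card V, by rintro _ ⟨s, -, rfl⟩; exact card_le_univ s⟩ ⟨t, ht, rfl⟩

lemma indepNumOn_univ_le_indepNum [Fintype V] : G.indepNumOn univ ≤ _root_.indepNum G := by
  obtain ⟨t, -, ht, hcard⟩ := exists_indepNumOn (G := G) univ
  exact hcard ▸ le_indepNum ht

lemma indepNum_induce_le_indepNumOn (M : Finset V) :
    _root_.indepNum (G.induce (M : Set V)) ≤ G.indepNumOn M := by
  refine csSup_le ⟨0, ∅, isIndepFinset_empty, rfl⟩ ?_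
  rintro _ ⟨s, hs, rfl⟩
  rw [← card_map (Function.Embedding.subtype _)]
  refine le_indepNumOn (fun x hx => ?_) ?_
  · obtain ⟨y, -, rfl⟩ := mem_map.1 hx
    exact y.2
  · rw [IsIndepFinset, coe_map, Function.Embedding.coe_subtype,
      Subtype.val_injective.injOn.pairwise_image]
    exact hs

end IndepNumOn

section CliqueCoverNumOn

variable {G : SimpleGraph V} {S S₁ S₂ : Finset V} {C : Finset (Finset V)}

def IsCliqueCoverOn (G : SimpleGraph V) (S : Finset V) (C : Finset (Finset V)) : Prop :=
  (∀ c ∈ C, G.IsClique (c : Set V)) ∧ ∀ v ∈ S, ∃ c ∈ C, v ∈ c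

noncomputable def cliqueCoverNumOn (G : SimpleGraph V) (S : Finset V) : ℕ :=
  sInf {n | ∃ C, G.IsCliqueCoverOn S C ∧ C.card = n}

lemma cliqueCoverNumOn_le (h : G.IsCliqueCoverOn S C) : G.cliqueCoverNumOn S ≤ C.card :=
  Nat.sInf_le ⟨C, h, rfl⟩

lemma exists_isCliqueCoverOn_card_eq (G : SimpleGraph V) (S : Finset V) :
    ∃ C, G.IsCliqueCoverOn S C ∧ C.card = G.cliqueCoverNumOn S := by
  classical
  refine Nat.sInf_mem (s := {n | ∃ C, G.IsCliqueCoverOn S C ∧ C.card = n})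
    ⟨_, S.image singleton, ⟨fun c hc => ?_, fun v hv => ⟨{v}, mem_image_of_mem _ hv, by simp⟩⟩, rfl⟩
  obtain ⟨v, -, rfl⟩ := mem_image.1 hc
  simp

lemma cliqueCoverNumOn_empty : G.cliqueCoverNumOn ∅ = 0 :=
  Nat.le_zero.1 (cliqueCoverNumOn_le (C := ∅) ⟨by simp, by simp⟩)

lemma cliqueCoverNumOn_mono (h : S₁ ⊆ S₂) : G.cliqueCoverNumOn S₁ ≤ G.cliqueCoverNumOn S₂ := by
  obtain ⟨C, ⟨hcl, hcov⟩, hcard⟩ := exists_isCliqueCoverOn_card_eq G S₂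
  exact hcard ▸ cliqueCoverNumOn_le ⟨hcl, fun v hv => hcov v (h hv)⟩

lemma cliqueCoverNumOn_union_le [DecidableEq V] :
    G.cliqueCoverNumOn (S₁ ∪ S₂) ≤ G.cliqueCoverNumOn S₁ + G.cliqueCoverNumOn S₂ := by
  obtain ⟨C₁, ⟨hcl₁, hcov₁⟩, hcard₁⟩ := exists_isCliqueCoverOn_card_eq G S₁
  obtain ⟨C₂, ⟨hcl₂, hcov₂⟩, hcard₂⟩ := exists_isCliqueCoverOn_card_eq G S₂
  rw [← hcard₁, ← hcard₂]
  refine (cliqueCoverNumOn_le (C := C₁ ∪ C₂) ⟨?_, ?_⟩).trans (card_union_le C₁ C₂)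
  · intro c hc
    exact (mem_union.1 hc).elim (hcl₁ c) (hcl₂ c)
  · intro v hv
    rcases mem_union.1 hv with hv | hv
    · obtain ⟨c, hc, hvc⟩ := hcov₁ v hv
      exact ⟨c, mem_union_left _ hc, hvc⟩
    · obtain ⟨c, hc, hvc⟩ := hcov₂ v hv
      exact ⟨c, mem_union_right _ hc, hvc⟩

lemma isCliqueCoverOn_univ_iff [Fintype V] : G.IsCliqueCoverOn univ C ↔ G.IsCliqueCover C := by
  simp [IsCliqueCoverOn, IsCliqueCover]

lemma cliqueCoverNumOn_univ [Fintype V] : G.cliqueCoverNumOn univ = cliqueCoverNum G := by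
  simp only [cliqueCoverNumOn, cliqueCoverNum, isCliqueCoverOn_univ_iff]

lemma cliqueCoverNumOn_le_cliqueCoverNum_induce (M : Finset V) :
    G.cliqueCoverNumOn M ≤ cliqueCoverNum (G.induce (M : Set V)) := by
  classical
  obtain ⟨D, ⟨hcl, hcov⟩, hcard⟩ := exists_isCliqueCoverOn_card_eq (G.induce (M : Set V)) univ
  rw [cliqueCoverNumOn_univ] at hcard
  let emb : (M : Set V) ↪ V := Function.Embedding.subtype _
  refine hcard ▸ (cliqueCoverNumOn_le (C := D.image (map emb)) ⟨?_, fun v hv => ?_⟩).trans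
    card_image_le
  · intro c hc
    obtain ⟨d, hd, rfl⟩ := mem_image.1 hc
    rw [coe_map, Function.Embedding.coe_subtype, IsClique,
      Subtype.val_injective.injOn.pairwise_image]
    exact hcl d hd
  · obtain ⟨d, hd, hvd⟩ := hcov ⟨v, hv⟩ (mem_univ _)
    exact ⟨d.map emb, mem_image_of_mem _ hd, mem_map_of_mem emb hvd⟩

end CliqueCoverNumOn

section Phi

variable {G H : SimpleGraph V}

lemma phi_nonneg : 0 ≤ phi G H :=
  Real.sSup_nonneg (by rintro _ ⟨W, -, rfl⟩; positivity)

variable [Fintype V]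

lemma bddAbove_phi_set : BddAbove {x : ℝ | ∃ W : Finset V, H.IsClique (W : Set V) ∧
    x = (cliqueCoverNum (G.induce (W : Set V)) : ℝ) /
      (_root_.indepNum (G.induce (W : Set V)) : ℝ)} :=
  ((Set.finite_range fun W : Finset V => (cliqueCoverNum (G.induce (W : Set V)) : ℝ) /
    (_root_.indepNum (G.induce (W : Set V)) : ℝ)).subset
      (by rintro _ ⟨W, -, rfl⟩; exact ⟨W, rfl⟩)).bddAbove

lemma cliqueCoverNumOn_le_phi_mul_indepNumOn {M : Finset V} (hM : H.IsClique (M : Set V)) :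
    (G.cliqueCoverNumOn M : ℝ) ≤ phi G H * G.indepNumOn M := by
  rcases M.eq_empty_or_nonempty with rfl | ⟨v, hv⟩
  · rw [cliqueCoverNumOn_empty, Nat.cast_zero]
    exact mul_nonneg phi_nonneg (Nat.cast_nonneg _)
  have hα : (0 : ℝ) < _root_.indepNum (G.induce (M : Set V)) := by
    have := le_indepNum (G := G.induce (M : Set V)) (t := {⟨v, hv⟩}) (by simp [IsIndepFinset])
    simp only [card_singleton] at this
    exact_mod_cast this
  have hratio := le_csSup (bddAbove_phi_set (G := G)) ⟨M, hM, rfl⟩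
  calc (G.cliqueCoverNumOn M : ℝ) ≤ cliqueCoverNum (G.induce (M : Set V)) := by
        exact_mod_cast cliqueCoverNumOn_le_cliqueCoverNum_induce M
    _ ≤ phi G H * _root_.indepNum (G.induce (M : Set V)) := (div_le_iff₀ hα).1 hratio
    _ ≤ phi G H * G.indepNumOn M := by
        gcongr
        · exact phi_nonneg
        · exact indepNum_induce_le_indepNumOn M

end Phi

def IsIntervalModel (H : SimpleGraph V) (a b : V → ℝ) : Prop :=
  ∀ u v, H.Adj u v ↔ u ≠ v ∧ (Set.Icc (a u) (b u) ∩ Set.Icc (a v) (b v)).Nonempty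

section IntervalModel

variable {G H : SimpleGraph V} {a b : V → ℝ}

lemma IsIntervalModel.isClique_filter_mem_Icc (hH : H.IsIntervalModel a b) (S : Finset V)
    (c : ℝ) [DecidablePred fun v => c ∈ Set.Icc (a v) (b v)] :
    H.IsClique (S.filter fun v => c ∈ Set.Icc (a v) (b v) : Set V) := by
  intro x hx y hy hxy
  rw [coe_filter] at hx hy
  exact (hH x y).2 ⟨hxy, c, hx.2, hy.2⟩

lemma exists_point_halving_indepNumOn (hab : ∀ v, a v ≤ b v)
    (hG : ∀ u v, G.Adj u v → (Set.Icc (a u) (b u) ∩ Set.Icc (a v) (b v)).Nonempty)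
    {S : Finset V} (hS : S.Nonempty) :
    ∃ c, 2 * G.indepNumOn (S.filter (b · < c)) ≤ G.indepNumOn S ∧
      2 * G.indepNumOn (S.filter (c < a ·)) ≤ G.indepNumOn S := by
  classical
  set m := G.indepNumOn S
  let T := S.filter fun w => m < 2 * G.indepNumOn (S.filter (b · ≤ b w))
  have hT : T.Nonempty := by
    obtain ⟨w, hw, hmax⟩ := S.exists_max_image b hS
    refine ⟨w, mem_filter.2 ⟨hw, ?_⟩⟩
    rw [filter_true_of_mem hmax]
    have := one_le_indepNumOn (G := G) hS
    omega
  obtain ⟨w, hwT, hmin⟩ := T.exists_min_image b hT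
  obtain ⟨-, hw⟩ := mem_filter.1 hwT
  refine ⟨b w, ?_, ?_⟩
  · obtain ⟨t, htL, hti, hcard⟩ := exists_indepNumOn (G := G) (S.filter (b · < b w))
    rw [← hcard]
    rcases t.eq_empty_or_nonempty with rfl | ht
    · simp
    obtain ⟨x, hxt, hxmax⟩ := t.exists_max_image b ht
    obtain ⟨hxS, hxw⟩ := mem_filter.1 (htL hxt)
    have hxT : x ∉ T := fun hxT => (hmin x hxT).not_gt hxw
    have htx : t ⊆ S.filter (b · ≤ b x) := fun y hy =>
      mem_filter.2 ⟨(mem_filter.1 (htL hy)).1, hxmax y hy⟩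
    have := le_indepNumOn htx hti
    simp only [T, mem_filter, hxS, true_and, not_lt] at hxT
    omega
  · have := indepNumOn_add_indepNumOn_le (G := G) (filter_subset (b · ≤ b w) S)
      (filter_subset (b w < a ·) S)
      (disjoint_filter.2 fun v _ h₁ h₂ => (h₁.trans_lt h₂).not_ge (hab v))
      (fun x hx y hy hxy => by
        obtain ⟨z, hzx, hzy⟩ := hG x y hxy
        linarith [hzx.2, hzy.1, (mem_filter.1 hx).2, (mem_filter.1 hy).2])
    omega

lemma _root_.IsIntervalGraph.exists_isIntervalModel_le [Fintype V] (hH : IsIntervalGraph H) :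
    ∃ a b : V → ℝ, (∀ v, a v ≤ b v) ∧ H.IsIntervalModel a b := by
  obtain ⟨a, b, hab⟩ := hH
  -- empty intervals are replaced by distinct points to the right of every interval
  let e := Fintype.equivFin V
  let p : V → ℝ := fun v => ∑ u, |b u| + 1 + (e v : ℕ)
  have hbp : ∀ u v, b u < p v := fun u v => by
    have := single_le_sum (fun w _ => abs_nonneg (b w)) (mem_univ u)
    have : (0 : ℝ) ≤ (e v : ℕ) := Nat.cast_nonneg _
    linarith [le_abs_self (b u)]
  have hp : Function.Injective p := fun u v h => e.injective (Fin.ext (by simpa [p] using h))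
  classical
  let a' v := if a v ≤ b v then a v else p v
  let b' v := if a v ≤ b v then b v else p v
  have hI : ∀ v, Set.Icc (a' v) (b' v) = if a v ≤ b v then Set.Icc (a v) (b v) else {p v} := by
    intro v
    by_cases h : a v ≤ b v <;> simp [a', b', h]
  refine ⟨a', b', fun v => by by_cases h : a v ≤ b v <;> simp [a', b', h], fun u v => ?_⟩
  rw [hab, hI, hI]
  by_cases hu : a u ≤ b u <;> by_cases hv : a v ≤ b v
  · simp only [hu, hv, if_true]
  · simp [hu, hv, (hbp u v).not_ge]
  · simp [hu, hv, (hbp v u).not_ge]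
  · simp [hu, hv, hp.eq_iff]
    exact Ne.symm

theorem cliqueCoverNumOn_le_phi_mul_coverBound [Fintype V] (hle : G ≤ H) (hab : ∀ v, a v ≤ b v)
    (hH : H.IsIntervalModel a b) (m : ℕ) (S : Finset V) (hS : G.indepNumOn S ≤ m) :
    (G.cliqueCoverNumOn S : ℝ) ≤ phi G H * coverBound m := by
  classical
  induction m using Nat.strong_induction_on generalizing S with
  | _ m ih =>
  rcases S.eq_empty_or_nonempty with rfl | hSne
  · rw [cliqueCoverNumOn_empty, Nat.cast_zero]
    exact mul_nonneg phi_nonneg (coverBound_nonneg m)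
  have hm : 1 ≤ m := (one_le_indepNumOn hSne).trans hS
  obtain ⟨c, hL, hR⟩ :=
    exists_point_halving_indepNumOn hab (fun u v h => ((hH u v).1 (hle h)).2) hSne
  set L := S.filter (b · < c)
  set R := S.filter (c < a ·)
  set M := S.filter fun v => c ∈ Set.Icc (a v) (b v)
  have hβL := ih (m / 2) (by omega) L (by omega)
  have hβR := ih (m / 2) (by omega) R (by omega)
  have hβM : (G.cliqueCoverNumOn M : ℝ) ≤ phi G H * m := by
    refine (cliqueCoverNumOn_le_phi_mul_indepNumOn (hH.isClique_filter_mem_Icc S c)).trans ?_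
    gcongr
    · exact phi_nonneg
    · exact (indepNumOn_mono (filter_subset _ S)).trans hS
  have hβS : (G.cliqueCoverNumOn S : ℝ) ≤
      G.cliqueCoverNumOn L + G.cliqueCoverNumOn R + G.cliqueCoverNumOn M := by
    have hSLRM : S ⊆ L ∪ R ∪ M := fun v hv => by
      simp only [L, R, M, mem_union, mem_filter, Set.mem_Icc, hv, true_and]
      by_contra! h
      linarith [h.1.1, h.2 h.1.2]
    have := (cliqueCoverNumOn_mono (G := G) hSLRM).trans <| cliqueCoverNumOn_union_le.trans
      (Nat.add_le_add_right cliqueCoverNumOn_union_le _)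
    exact_mod_cast this
  calc (G.cliqueCoverNumOn S : ℝ) ≤ phi G H * (m + 2 * coverBound (m / 2)) := by linarith
    _ ≤ phi G H * coverBound m :=
        mul_le_mul_of_nonneg_left (add_two_mul_coverBound_half_le hm) phi_nonneg

end IntervalModel

end SimpleGraph

theorem clique_cover_bound_interval_supergraph' {V : Type*} [Fintype V]
    (G H : SimpleGraph V) (hle : G ≤ H) (hH : IsIntervalGraph H) :
    (cliqueCoverNum G : ℝ) ≤
      2 * (_root_.indepNum G : ℝ) * phi G H * (Real.logb 2 (_root_.indepNum G : ℝ) + 1) := by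
  obtain ⟨a, b, hab, hmodel⟩ := hH.exists_isIntervalModel_le
  calc (cliqueCoverNum G : ℝ) = G.cliqueCoverNumOn Finset.univ := by
        rw [cliqueCoverNumOn_univ]
    _ ≤ phi G H * coverBound (_root_.indepNum G) :=
        cliqueCoverNumOn_le_phi_mul_coverBound hle hab hmodel _ _ indepNumOn_univ_le_indepNum
    _ = _ := by
        unfold coverBound
        ring
end

section
/- Every interval graph is perfect: for every induced subgraph of an interval graph, the clique cover number equals the independence number. -/
open SimpleGraph

/-!
An independent set meets each clique of a cover at most once, so `α ≤ β` in every graph; it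
suffices to exhibit a clique cover and an independent set of the same size. For intervals,
take the vertex `v` whose interval `[a v, b v]` ends first: the interval of every neighbour of
`v` contains the point `b v`, so `v` and its neighbours form a clique. Put `v` into the
independent set and this clique into the cover, delete the clique and recurse.
-/

namespace SimpleGraph

variable {V : Type*} {G : SimpleGraph V}

theorem IsIndepFinset.card_le_card_of_isCliqueCover {s : Finset V} (hs : G.IsIndepFinset s)
    {C : Finset (Finset V)} (hC : G.IsCliqueCover C) : s.card ≤ C.card := by
  classical
  choose f hfC hf using hC.2
  refine Finset.card_le_card_of_injOn f (fun v _ => hfC v) fun u hu w hw huw => ?_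
  by_contra hne
  exact hs hu hw hne (hC.1 _ (hfC u) (hf u) (huw ▸ hf w) hne)

theorem IsIndepFinset.card_le_indepNum {s : Finset V} (hs : G.IsIndepFinset s)
    {C : Finset (Finset V)} (hC : G.IsCliqueCover C) : s.card ≤ _root_.indepNum G := by
  refine le_csSup ⟨C.card, ?_⟩ ⟨s, hs, rfl⟩
  rintro n ⟨t, ht, rfl⟩
  exact ht.card_le_card_of_isCliqueCover hC

theorem indepNum_le_cliqueCoverNum {C : Finset (Finset V)} (hC : G.IsCliqueCover C) :
    _root_.indepNum G ≤ cliqueCoverNum G := by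
  obtain ⟨C₀, hC₀, hcard⟩ :=
    Nat.sInf_mem (s := {n | ∃ C : Finset (Finset V), G.IsCliqueCover C ∧ C.card = n})
      ⟨_, C, hC, rfl⟩
  refine csSup_le ⟨0, ∅, by simp [IsIndepFinset], rfl⟩ ?_
  rintro n ⟨t, ht, rfl⟩
  exact (ht.card_le_card_of_isCliqueCover hC₀).trans_eq hcard

theorem cliqueCoverNum_eq_indepNum_of_card_le {C : Finset (Finset V)} (hC : G.IsCliqueCover C)
    {s : Finset V} (hs : G.IsIndepFinset s) (hCs : C.card ≤ s.card) :
    cliqueCoverNum G = _root_.indepNum G :=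
  le_antisymm (calc
      cliqueCoverNum G ≤ C.card := Nat.sInf_le ⟨C, hC, rfl⟩
      _ ≤ s.card := hCs
      _ ≤ _root_.indepNum G := hs.card_le_indepNum hC)
    (indepNum_le_cliqueCoverNum hC)

end SimpleGraph

section IntervalGraph

variable {V : Type*} {G : SimpleGraph V}

def IsIntervalRepr (G : SimpleGraph V) (a b : V → ℝ) : Prop :=
  ∀ u v : V, G.Adj u v ↔ u ≠ v ∧ (Set.Icc (a u) (b u) ∩ Set.Icc (a v) (b v)).Nonempty

theorem IsIntervalGraph.induce (hG : IsIntervalGraph G) (S : Set V) :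
    IsIntervalGraph (G.induce S) := by
  obtain ⟨a, b, hab⟩ := hG
  exact ⟨a ∘ (↑), b ∘ (↑), fun u v => by simp [hab, Subtype.ext_iff]⟩

theorem IsIntervalRepr.right_mem_Icc_of_adj {a b : V → ℝ} (hab : IsIntervalRepr G a b)
    {u v : V} (huv : G.Adj v u) (hle : b v ≤ b u) : b v ∈ Set.Icc (a u) (b u) := by
  obtain ⟨x, ⟨-, hxv⟩, hxu, -⟩ := ((hab v u).1 huv).2
  exact ⟨hxu.trans hxv, hle⟩

theorem IsIntervalRepr.isClique_filter_adj_of_forall_le {a b : V → ℝ}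
    (hab : IsIntervalRepr G a b)
    [DecidableEq V] [DecidableRel G.Adj] {S : Finset V} {v : V} (hv : ∀ u ∈ S, b v ≤ b u) :
    G.IsClique (S.filter fun u => u = v ∨ G.Adj v u : Set V) := by
  intro u hu w hw huw
  simp only [Finset.coe_filter, Set.mem_ofPred_eq] at hu hw
  obtain ⟨huS, rfl | hvu⟩ := hu
  · exact hw.2.resolve_left (Ne.symm huw)
  obtain ⟨hwS, rfl | hvw⟩ := hw
  · exact hvu.symm
  exact (hab u w).2 ⟨huw, b v, hab.right_mem_Icc_of_adj hvu (hv u huS),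
    hab.right_mem_Icc_of_adj hvw (hv w hwS)⟩

theorem IsIntervalRepr.exists_cliqueCover_indepFinset_card_le {a b : V → ℝ}
    (hab : IsIntervalRepr G a b) (S : Finset V) :
    ∃ (C : Finset (Finset V)) (s : Finset V), (∀ c ∈ C, G.IsClique (c : Set V)) ∧
      (∀ v ∈ S, ∃ c ∈ C, v ∈ c) ∧ s ⊆ S ∧ G.IsIndepFinset s ∧ C.card ≤ s.card := by
  classical
  induction S using Finset.strongInduction with
  | _ S ih =>
  rcases S.eq_empty_or_nonempty with rfl | hS
  · exact ⟨∅, ∅, by simp, by simp, by simp, by simp [IsIndepFinset], le_rfl⟩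
  obtain ⟨v, hvS, hv⟩ := S.exists_min_image b hS
  set c := S.filter fun u => u = v ∨ G.Adj v u
  have hvc : v ∈ c := Finset.mem_filter.2 ⟨hvS, Or.inl rfl⟩
  obtain ⟨C, s, hC, hCS, hsS, hs, hcard⟩ :=
    ih (S \ c) (Finset.sdiff_ssubset (Finset.filter_subset _ _) ⟨v, hvc⟩)
  have hvs : v ∉ s := fun h => (Finset.mem_sdiff.1 (hsS h)).2 hvc
  refine ⟨insert c C, insert v s, ?_, ?_, ?_, ?_, ?_⟩
  · exact Finset.forall_mem_insert _ _ _ |>.2 ⟨hab.isClique_filter_adj_of_forall_le hv, hC⟩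
  · intro u huS
    by_cases huc : u ∈ c
    · exact ⟨c, Finset.mem_insert_self _ _, huc⟩
    · obtain ⟨d, hd, hud⟩ := hCS u (Finset.mem_sdiff.2 ⟨huS, huc⟩)
      exact ⟨d, Finset.mem_insert_of_mem hd, hud⟩
  · exact Finset.insert_subset hvS (hsS.trans Finset.sdiff_subset)
  · rw [IsIndepFinset, Finset.coe_insert]
    have hvu : ∀ u ∈ s, ¬ G.Adj v u := fun u hu hvu =>
      have hu := Finset.mem_sdiff.1 (hsS hu)
      hu.2 (Finset.mem_filter.2 ⟨hu.1, Or.inr hvu⟩)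
    exact Set.pairwise_insert.2 ⟨hs, fun u hu _ => ⟨hvu u hu, fun huv => hvu u hu huv.symm⟩⟩
  · calc (insert c C).card ≤ C.card + 1 := Finset.card_insert_le _ _
      _ ≤ s.card + 1 := by omega
      _ = (insert v s).card := (Finset.card_insert_of_notMem hvs).symm

theorem IsIntervalGraph.cliqueCoverNum_eq_indepNum [Finite V] (hG : IsIntervalGraph G) :
    cliqueCoverNum G = _root_.indepNum G := by
  have := Fintype.ofFinite V
  obtain ⟨a, b, hab⟩ := hG
  obtain ⟨C, s, hC, hCV, -, hs, hcard⟩ :=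
    IsIntervalRepr.exists_cliqueCover_indepFinset_card_le hab Finset.univ
  exact cliqueCoverNum_eq_indepNum_of_card_le ⟨hC, fun v => hCV v (Finset.mem_univ v)⟩ hs hcard

end IntervalGraph

theorem interval_graph_perfect {V : Type*} (G : SimpleGraph V)
    (h : IsIntervalGraph G) :
    ∀ W : Finset V, cliqueCoverNum (G.induce (W : Set V)) =
      _root_.indepNum (G.induce (W : Set V)) :=
  fun W => (h.induce W).cliqueCoverNum_eq_indepNum
end
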